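/- arXiv:1906.04500 — 7 statements merged into one kernel-verified Lean document; each statement's English description precedes it below -/
import Mathlib

section
/- Let n ≥ 1 and let Δ = (δ₁, δ₂, δ₃) be a triple of vectors in ℤⁿ with δ₁ + δ₂ + δ₃ = 0. Then there exists a constant ε = ε(Δ) ≥ 0 with the following property: for all distinct α₁, α₂ ∈ ℂ and all κ = (κ₁,…,κₙ) with each κ_j ∈ ℂ∖{0}, setting S = ℂ∖{α₁,α₂} and defining f : S → (ℂ∖{0})ⁿ by f(z)_j = κ_j (z−α₁)^{−δ₁^j} (z−α₂)^{−δ₂^j} (integer powers, δ_i = (δ_i^1,…,δ_i^n)), there exists v ∈ ℝⁿ such that, with Γ = ⋃_{i=1}^{3} {v + t·δ_i : t ∈ [0,∞)}, both Log(f(S)) ⊆ U_ε(Γ) and Γ ⊆ U_ε(Log(f(S))). -/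
/-!
In logarithmic coordinates the curve reads
`Log f(z) = Log κ - log |z - α₁| • δ₁ - log |z - α₂| • δ₂`, so its amoeba is the image, under an
affine map `ℝ² → ℝⁿ` that is Lipschitz with constant `‖δ₁‖ + ‖δ₂‖`, of the planar set of pairs
`(log s₁, log s₂)` where `s₁, s₂, r = |α₁ - α₂|` are the sides of a (possibly degenerate)
triangle. The same map sends the planar tropical line with vertex `(log r, log r)` onto the three
rays `Γ`. Every point of that tropical line comes from a triangle, and every triangle gives a point
within `log 2` of it, because the two longest sides of a triangle differ at most by a factor `2`.
-/

noncomputable def LogMap {n : ℕ} (z : Fin n → ℂ) : Fin n → ℝ :=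
  fun i => Real.log ‖z i‖

/-- Open ε-neighbourhood of a set with respect to the sup norm on `Fin n → ℝ`. -/
def nbhd {n : ℕ} (ε : ℝ) (X : Set (Fin n → ℝ)) : Set (Fin n → ℝ) :=
  {y | ∃ x ∈ X, ‖y - x‖ < ε}

def ray {n : ℕ} (v d : Fin n → ℝ) : Set (Fin n → ℝ) :=
  {x | ∃ t : ℝ, 0 ≤ t ∧ x = v + t • d}

def intCast {n : ℕ} (d : Fin n → ℤ) : Fin n → ℝ := fun i => (d i : ℝ)

open NNReal

lemma Complex.exists_norm_eq_and_norm_sub_ofReal_eq {r s₁ s₂ : ℝ} (hr : 0 < r)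
    (h₁ : |s₁ - s₂| ≤ r) (h₂ : r ≤ s₁ + s₂) :
    ∃ w : ℂ, ‖w‖ = s₁ ∧ ‖w - r‖ = s₂ := by
  obtain ⟨h₁', h₁''⟩ := abs_le.mp h₁
  have hs₁ : 0 ≤ s₁ := by linarith
  have hs₂ : 0 ≤ s₂ := by linarith
  -- `x + y i` is the apex of the triangle with base `[0, r]` and sides `s₁`, `s₂`
  set x := (s₁ ^ 2 + r ^ 2 - s₂ ^ 2) / (2 * r) with hx
  have hrx : 2 * r * x = s₁ ^ 2 + r ^ 2 - s₂ ^ 2 := by rw [hx]; field_simp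
  have hx_sq : x ^ 2 ≤ s₁ ^ 2 := by
    rw [hx, div_pow, div_le_iff₀ (by positivity)]
    have hle : 0 ≤ (s₁ + r) ^ 2 - s₂ ^ 2 := by nlinarith
    have hge : 0 ≤ s₂ ^ 2 - (s₁ - r) ^ 2 := by nlinarith
    nlinarith [mul_nonneg hle hge]
  set y := √(s₁ ^ 2 - x ^ 2)
  have hy : y ^ 2 = s₁ ^ 2 - x ^ 2 := Real.sq_sqrt (by linarith)
  refine ⟨x + y * Complex.I, ?_, ?_⟩
  · rw [Complex.norm_def, ← Real.sqrt_sq hs₁]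
    congr 1
    simp [Complex.normSq_apply]
    linear_combination hy
  · rw [Complex.norm_def, ← Real.sqrt_sq hs₂]
    congr 1
    simp [Complex.normSq_apply]
    linear_combination hy - hrx

lemma Complex.exists_norm_sub_eq_and_norm_sub_eq {α₁ α₂ : ℂ} (hα : α₁ ≠ α₂) {s₁ s₂ : ℝ}
    (h₁ : |s₁ - s₂| ≤ ‖α₁ - α₂‖) (h₂ : ‖α₁ - α₂‖ ≤ s₁ + s₂) :
    ∃ z : ℂ, ‖z - α₁‖ = s₁ ∧ ‖z - α₂‖ = s₂ := by
  set r := ‖α₁ - α₂‖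
  have hr : 0 < r := norm_pos_iff.mpr (sub_ne_zero.mpr hα)
  obtain ⟨w, hw₁, hw₂⟩ := exists_norm_eq_and_norm_sub_ofReal_eq hr h₁ h₂
  set u := (α₂ - α₁) / r
  have hu : ‖u‖ = 1 := by
    rw [norm_div, norm_sub_rev, Complex.norm_real, Real.norm_of_nonneg hr.le, div_self hr.ne']
  have hru : (r : ℂ) * u = α₂ - α₁ := mul_div_cancel₀ _ (by exact_mod_cast hr.ne')
  refine ⟨α₁ + w * u, ?_, ?_⟩
  · rw [add_sub_cancel_left, norm_mul, hu, mul_one, hw₁]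
  · rw [show α₁ + w * u - α₂ = (w - r) * u by linear_combination hru, norm_mul, hu, mul_one, hw₂]

lemma abs_log_sub_log_le_log_two {p q : ℝ} (hp : 0 < p) (hq : 0 < q)
    (hpq : p ≤ 2 * q) (hqp : q ≤ 2 * p) : |Real.log p - Real.log q| ≤ Real.log 2 := by
  rw [abs_sub_le_iff, sub_le_iff_le_add, sub_le_iff_le_add,
    ← Real.log_mul two_ne_zero hq.ne', ← Real.log_mul two_ne_zero hp.ne']
  exact ⟨Real.log_le_log hp hpq, Real.log_le_log hq hqp⟩

def planarTropLine (L : ℝ) : Set (ℝ × ℝ) :=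
  {p | p.1 ≤ L ∧ p.2 = L ∨ p.1 = L ∧ p.2 ≤ L ∨ L ≤ p.1 ∧ p.2 = p.1}

lemma exists_mem_planarTropLine_dist_log_le {r s₁ s₂ : ℝ} (hr : 0 < r) (hs₁ : 0 < s₁)
    (hs₂ : 0 < s₂) (h₁ : |s₁ - s₂| ≤ r) (h₂ : r ≤ s₁ + s₂) :
    ∃ q ∈ planarTropLine (Real.log r), dist (Real.log s₁, Real.log s₂) q ≤ Real.log 2 := by
  obtain ⟨h₁', h₁''⟩ := abs_le.mp h₁
  have hlog : 0 ≤ Real.log 2 := by positivity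
  simp only [Prod.dist_eq, Real.dist_eq, max_le_iff]
  rcases le_total s₁ s₂ with h₁₂ | h₂₁
  · rcases le_total s₁ r with hs₁r | hrs₁
    · refine ⟨(Real.log s₁, Real.log r), Or.inl ⟨Real.log_le_log hs₁ hs₁r, rfl⟩,
        by simpa using hlog, abs_log_sub_log_le_log_two hs₂ hr (by linarith) (by linarith)⟩
    · refine ⟨(Real.log s₁, Real.log s₁), Or.inr (Or.inr ⟨Real.log_le_log hr hrs₁, rfl⟩),
        by simpa using hlog, abs_log_sub_log_le_log_two hs₂ hs₁ (by linarith) (by linarith)⟩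
  · rcases le_total s₂ r with hs₂r | hrs₂
    · refine ⟨(Real.log r, Real.log s₂), Or.inr (Or.inl ⟨rfl, Real.log_le_log hs₂ hs₂r⟩),
        abs_log_sub_log_le_log_two hs₁ hr (by linarith) (by linarith), by simpa using hlog⟩
    · refine ⟨(Real.log s₂, Real.log s₂), Or.inr (Or.inr ⟨Real.log_le_log hr hrs₂, rfl⟩),
        abs_log_sub_log_le_log_two hs₁ hs₂ (by linarith) (by linarith), by simpa using hlog⟩

noncomputable def logDist (α₁ α₂ z : ℂ) : ℝ × ℝ :=
  (Real.log ‖z - α₁‖, Real.log ‖z - α₂‖)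

lemma exists_mem_planarTropLine_dist_logDist_le {α₁ α₂ z : ℂ} (hα : α₁ ≠ α₂) (hz₁ : z ≠ α₁)
    (hz₂ : z ≠ α₂) :
    ∃ q ∈ planarTropLine (Real.log ‖α₁ - α₂‖), dist (logDist α₁ α₂ z) q ≤ Real.log 2 := by
  refine exists_mem_planarTropLine_dist_log_le (norm_pos_iff.mpr (sub_ne_zero.mpr hα))
    (norm_pos_iff.mpr (sub_ne_zero.mpr hz₁)) (norm_pos_iff.mpr (sub_ne_zero.mpr hz₂)) ?_ ?_
  · simpa [norm_sub_rev α₁ α₂] using abs_norm_sub_norm_le (z - α₁) (z - α₂)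
  · simpa [norm_sub_rev α₁ z] using norm_sub_le_norm_sub_add_norm_sub α₁ z α₂

lemma planarTropLine_subset_image_logDist {α₁ α₂ : ℂ} (hα : α₁ ≠ α₂) :
    planarTropLine (Real.log ‖α₁ - α₂‖) ⊆ logDist α₁ α₂ '' {z | z ≠ α₁ ∧ z ≠ α₂} := by
  set r := ‖α₁ - α₂‖
  have hr : 0 < r := norm_pos_iff.mpr (sub_ne_zero.mpr hα)
  rintro ⟨a, b⟩ hab
  suffices h : |Real.exp a - Real.exp b| ≤ r ∧ r ≤ Real.exp a + Real.exp b by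
    obtain ⟨z, hz₁, hz₂⟩ := Complex.exists_norm_sub_eq_and_norm_sub_eq hα h.1 h.2
    refine ⟨z, ⟨?_, ?_⟩, by simp [logDist, hz₁, hz₂]⟩ <;> rintro rfl
    · exact (Real.exp_pos a).ne (by simpa using hz₁)
    · exact (Real.exp_pos b).ne (by simpa using hz₂)
  have ha := Real.exp_pos a
  have hb := Real.exp_pos b
  simp only [planarTropLine, Set.mem_ofPred_eq] at hab
  rw [abs_le]
  rcases hab with ⟨h, rfl⟩ | ⟨rfl, h⟩ | ⟨h, rfl⟩
  all_goals
    have := Real.exp_le_exp.mpr h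
    rw [Real.exp_log hr] at *
    refine ⟨⟨?_, ?_⟩, ?_⟩ <;> linarith

-- `Log (κ x^(-δ₁) y^(-δ₂))` as a function of `p = (log |x|, log |y|)`, where `c = Log κ`
def logMonomial {E : Type*} [AddCommGroup E] [Module ℝ E] (c d₁ d₂ : E) (p : ℝ × ℝ) : E :=
  c - p.1 • d₁ - p.2 • d₂

lemma lipschitzWith_logMonomial {E : Type*} [NormedAddCommGroup E] [NormedSpace ℝ E] (c d₁ d₂ : E) :
    LipschitzWith (‖d₁‖₊ + ‖d₂‖₊) (logMonomial c d₁ d₂) := by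
  refine LipschitzWith.of_dist_le_mul fun p q => ?_
  have h₁ : |q.1 - p.1| ≤ dist p q := by rw [abs_sub_comm, Prod.dist_eq]; exact le_max_left ..
  have h₂ : |q.2 - p.2| ≤ dist p q := by rw [abs_sub_comm, Prod.dist_eq]; exact le_max_right ..
  calc dist (logMonomial c d₁ d₂ p) (logMonomial c d₁ d₂ q)
      = ‖(q.1 - p.1) • d₁ + (q.2 - p.2) • d₂‖ := by
        rw [dist_eq_norm, logMonomial, logMonomial]; congr 1; module
    _ ≤ |q.1 - p.1| * ‖d₁‖ + |q.2 - p.2| * ‖d₂‖ := by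
        grw [norm_add_le, norm_smul, norm_smul, Real.norm_eq_abs, Real.norm_eq_abs]
    _ ≤ dist p q * ‖d₁‖ + dist p q * ‖d₂‖ := by gcongr
    _ = ↑(‖d₁‖₊ + ‖d₂‖₊) * dist p q := by push_cast; ring

lemma image_logMonomial_planarTropLine {n : ℕ} {d₁ d₂ d₃ : Fin n → ℝ} (h : d₁ + d₂ + d₃ = 0)
    (c : Fin n → ℝ) (L : ℝ) :
    logMonomial c d₁ d₂ '' planarTropLine L =
      ray (logMonomial c d₁ d₂ (L, L)) d₁ ∪ ray (logMonomial c d₁ d₂ (L, L)) d₂ ∪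
        ray (logMonomial c d₁ d₂ (L, L)) d₃ := by
  rw [eq_neg_of_add_eq_zero_right h]
  ext x
  simp only [Set.mem_image, Set.mem_union, ray, planarTropLine, logMonomial, Set.mem_ofPred_eq,
    Prod.exists]
  constructor
  · rintro ⟨a, b, ⟨h, hb⟩ | ⟨ha, h⟩ | ⟨h, hb⟩, rfl⟩
    · exact Or.inl (Or.inl ⟨L - a, by linarith, by rw [hb]; module⟩)
    · exact Or.inl (Or.inr ⟨L - b, by linarith, by rw [ha]; module⟩)
    · exact Or.inr ⟨a - L, by linarith, by rw [hb]; module⟩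
  · rintro ((⟨t, ht, rfl⟩ | ⟨t, ht, rfl⟩) | ⟨t, ht, rfl⟩)
    · exact ⟨L - t, L, Or.inl ⟨by linarith, rfl⟩, by module⟩
    · exact ⟨L, L - t, Or.inr (Or.inl ⟨rfl, by linarith⟩), by module⟩
    · exact ⟨L + t, L + t, Or.inr (Or.inr ⟨by linarith, rfl⟩), by module⟩

lemma LogMap_mul_zpow_mul_zpow {n : ℕ} {κ : Fin n → ℂ} (hκ : ∀ j, κ j ≠ 0) (δ₁ δ₂ : Fin n → ℤ)
    {α₁ α₂ z : ℂ} (hz₁ : z ≠ α₁) (hz₂ : z ≠ α₂) :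
    LogMap (fun j => κ j * (z - α₁) ^ (-(δ₁ j)) * (z - α₂) ^ (-(δ₂ j))) =
      logMonomial (LogMap κ) (intCast δ₁) (intCast δ₂) (logDist α₁ α₂ z) := by
  have hz₁' : ‖z - α₁‖ ≠ 0 := norm_ne_zero_iff.mpr (sub_ne_zero.mpr hz₁)
  have hz₂' : ‖z - α₂‖ ≠ 0 := norm_ne_zero_iff.mpr (sub_ne_zero.mpr hz₂)
  funext j
  have hκ' : ‖κ j‖ ≠ 0 := norm_ne_zero_iff.mpr (hκ j)
  simp only [LogMap, logMonomial, logDist, intCast, norm_mul, norm_zpow, Pi.sub_apply,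
    Pi.smul_apply, smul_eq_mul]
  rw [Real.log_mul (by positivity) (by positivity), Real.log_mul hκ' (by positivity),
    Real.log_zpow, Real.log_zpow]
  push_cast
  ring

lemma LipschitzWith.image_subset_nbhd {α : Type*} [PseudoMetricSpace α] {n : ℕ}
    {f : α → Fin n → ℝ} {K : ℝ≥0} (hf : LipschitzWith K f) {X Y : Set α} {δ ε : ℝ}
    (hXY : ∀ p ∈ X, ∃ q ∈ Y, dist p q ≤ δ) (hε : K * δ < ε) : f '' X ⊆ nbhd ε (f '' Y) := by
  rintro _ ⟨p, hp, rfl⟩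
  obtain ⟨q, hq, hpq⟩ := hXY p hp
  refine ⟨f q, Set.mem_image_of_mem f hq, ?_⟩
  rw [← dist_eq_norm]
  calc dist (f p) (f q) ≤ K * dist p q := hf.dist_le_mul p q
    _ ≤ K * δ := by gcongr
    _ < ε := hε

lemma subset_nbhd {n : ℕ} {X Y : Set (Fin n → ℝ)} {ε : ℝ} (hε : 0 < ε) (hXY : X ⊆ Y) :
    X ⊆ nbhd ε Y :=
  fun x hx => ⟨x, hXY hx, by simpa using hε⟩

theorem stmt_0_general (n : ℕ) (δ₁ δ₂ δ₃ : Fin n → ℤ)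
    (hΔ : δ₁ + δ₂ + δ₃ = 0) :
    ∃ ε : ℝ, 0 ≤ ε ∧
      ∀ (α₁ α₂ : ℂ), α₁ ≠ α₂ →
      ∀ κ : Fin n → ℂ, (∀ j, κ j ≠ 0) →
      ∃ v : Fin n → ℝ,
        LogMap '' ((fun z : ℂ => fun j : Fin n =>
              κ j * (z - α₁) ^ (-(δ₁ j)) * (z - α₂) ^ (-(δ₂ j))) ''
            {z : ℂ | z ≠ α₁ ∧ z ≠ α₂})
          ⊆ nbhd ε (ray v (intCast δ₁) ∪ ray v (intCast δ₂) ∪ ray v (intCast δ₃)) ∧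
        ray v (intCast δ₁) ∪ ray v (intCast δ₂) ∪ ray v (intCast δ₃)
          ⊆ nbhd ε (LogMap '' ((fun z : ℂ => fun j : Fin n =>
              κ j * (z - α₁) ^ (-(δ₁ j)) * (z - α₂) ^ (-(δ₂ j))) ''
            {z : ℂ | z ≠ α₁ ∧ z ≠ α₂})) := by
  set K := ‖intCast δ₁‖₊ + ‖intCast δ₂‖₊
  have hε : (0 : ℝ) < K * Real.log 2 + 1 := by positivity
  refine ⟨K * Real.log 2 + 1, hε.le, fun α₁ α₂ hα κ hκ => ?_⟩
  set φ := logMonomial (LogMap κ) (intCast δ₁) (intCast δ₂)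
  set L := Real.log ‖α₁ - α₂‖
  have hΔ' : intCast δ₁ + intCast δ₂ + intCast δ₃ = 0 := by
    funext j; simpa [intCast] using congr(($(congrFun hΔ j) : ℝ))
  have hamoeba : LogMap '' ((fun z : ℂ => fun j : Fin n =>
      κ j * (z - α₁) ^ (-(δ₁ j)) * (z - α₂) ^ (-(δ₂ j))) '' {z : ℂ | z ≠ α₁ ∧ z ≠ α₂}) =
      φ '' (logDist α₁ α₂ '' {z : ℂ | z ≠ α₁ ∧ z ≠ α₂}) := by
    simp only [Set.image_image]
    exact Set.image_congr fun z hz => LogMap_mul_zpow_mul_zpow hκ δ₁ δ₂ hz.1 hz.2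
  refine ⟨φ (L, L), ?_, ?_⟩ <;> rw [← image_logMonomial_planarTropLine hΔ', hamoeba]
  · refine (lipschitzWith_logMonomial _ _ _).image_subset_nbhd ?_ (lt_add_one _)
    rintro _ ⟨z, hz, rfl⟩
    exact exists_mem_planarTropLine_dist_logDist_le hα hz.1 hz.2
  · exact subset_nbhd hε (Set.image_mono (planarTropLine_subset_image_logDist hα))

/-- For any toric degree `Δ = (δ₁, δ₂, δ₃)` (with `δ₁ + δ₂ + δ₃ = 0`)
there is a constant `ε ≥ 0` such that the amoeba of any complex rational curve of toric
degree `Δ` is within `ε` (in sup norm) of the image of a tropical rational curve of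
degree `Δ`, i.e. of a union of three rays from a common vertex `v` in directions
`δ₁, δ₂, δ₃`, and vice versa. -/
theorem stmt_0 (n : ℕ) (hn : 1 ≤ n) (δ₁ δ₂ δ₃ : Fin n → ℤ)
    (hΔ : δ₁ + δ₂ + δ₃ = 0) :
    ∃ ε : ℝ, 0 ≤ ε ∧
      ∀ (α₁ α₂ : ℂ), α₁ ≠ α₂ →
      ∀ κ : Fin n → ℂ, (∀ j, κ j ≠ 0) →
      ∃ v : Fin n → ℝ,
        LogMap '' ((fun z : ℂ => fun j : Fin n =>
              κ j * (z - α₁) ^ (-(δ₁ j)) * (z - α₂) ^ (-(δ₂ j))) ''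
            {z : ℂ | z ≠ α₁ ∧ z ≠ α₂})
          ⊆ nbhd ε (ray v (intCast δ₁) ∪ ray v (intCast δ₂) ∪ ray v (intCast δ₃)) ∧
        ray v (intCast δ₁) ∪ ray v (intCast δ₂) ∪ ray v (intCast δ₃)
          ⊆ nbhd ε (LogMap '' ((fun z : ℂ => fun j : Fin n =>
              κ j * (z - α₁) ^ (-(δ₁ j)) * (z - α₂) ^ (-(δ₂ j))) ''
            {z : ℂ | z ≠ α₁ ∧ z ≠ α₂})) :=
  stmt_0_general n δ₁ δ₂ δ₃ hΔ
end

section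
/- Let a, b, c ∈ ℂ∖{0} and let L = {(x,y) ∈ (ℂ∖{0})² : a·x + b·y = c}. Set v = (log|c| − log|a|, log|c| − log|b|) ∈ ℝ². Then Log(L) ⊆ U_{2 log 2}(Γ_v) and Γ_v ⊆ U_{4 log 2}(Log(L)). -/
/-- Standard tropical line in `ℝ²` with vertex `v`: three rays in directions
`(-1,0)`, `(0,-1)` and `(1,1)`. -/
noncomputable def stdTropLine (v : Fin 2 → ℝ) : Set (Fin 2 → ℝ) :=
  ray v ![-1, 0] ∪ ray v ![0, -1] ∪ ray v ![1, 1]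

open Real Set

/-!
Rescaling `(x, y) ↦ (a x / c, b y / c)` maps `L` onto the line `X + Y = 1` and becomes translation
by `v` under `Log`; translation carries `Γ₀` to `Γ_v` and commutes with taking neighbourhoods. So it
suffices to show that `Log {X + Y = 1}` and `Γ₀`, the set where the maximum of `w₀, w₁, 0` is
attained twice, are within sup-distance `log 2` of each other.

If `X + Y = 1`, then `|X|`, `|Y|` and `1` satisfy the triangle inequalities, so each of `log |X|`,
`log |Y|` and `0` exceeds the larger of the other two by at most `log 2`; equalising the two
largest of them moves one coordinate by at most `log 2` and lands on `Γ₀`. Conversely, every point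
of `Γ₀` is `(s, max s 0)` or its mirror image, which lies within `log 2` of
`Log (-eˢ, 1 + eˢ) = (s, log (1 + eˢ))`.
-/

def affineLine (a b c : ℂ) : Set (Fin 2 → ℂ) :=
  {p | p 0 ≠ 0 ∧ p 1 ≠ 0 ∧ a * p 0 + b * p 1 = c}

section Translation

variable {n : ℕ}

lemma ray_eq_image_add (v d : Fin n → ℝ) : ray v d = (v + ·) '' ray 0 d := by
  ext x
  simp only [ray, mem_ofPred_eq, mem_image, zero_add]
  refine ⟨fun ⟨t, ht, hx⟩ ↦ ⟨t • d, ⟨t, ht, rfl⟩, hx.symm⟩, ?_⟩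
  rintro ⟨_, ⟨t, ht, rfl⟩, rfl⟩
  exact ⟨t, ht, rfl⟩

lemma nbhd_image_add (ε : ℝ) (v : Fin n → ℝ) (X : Set (Fin n → ℝ)) :
    nbhd ε ((v + ·) '' X) = (v + ·) '' nbhd ε X := by
  ext y
  constructor
  · rintro ⟨_, ⟨x, hx, rfl⟩, hy⟩
    exact ⟨y - v, ⟨x, hx, by rwa [sub_sub]⟩, add_sub_cancel v y⟩
  · rintro ⟨y, ⟨x, hx, hy⟩, rfl⟩
    exact ⟨v + x, ⟨x, hx, rfl⟩, by rwa [add_sub_add_left_eq_sub]⟩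

lemma subset_nbhd_of_forall_norm_sub_le {X Y : Set (Fin n → ℝ)} {δ ε : ℝ}
    (h : ∀ x ∈ X, ∃ y ∈ Y, ‖x - y‖ ≤ δ) (hδε : δ < ε) : X ⊆ nbhd ε Y := fun x hx ↦
  let ⟨y, hy, hxy⟩ := h x hx
  ⟨y, hy, hxy.trans_lt hδε⟩

end Translation

lemma stdTropLine_eq_image_add (v : Fin 2 → ℝ) :
    stdTropLine v = (v + ·) '' stdTropLine 0 := by
  simp only [stdTropLine, image_union, ← ray_eq_image_add]

lemma norm_le_of_abs_le_fin_two {u : Fin 2 → ℝ} {δ : ℝ} (h₀ : |u 0| ≤ δ) (h₁ : |u 1| ≤ δ) :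
    ‖u‖ ≤ δ :=
  (pi_norm_le_iff_of_nonneg ((abs_nonneg _).trans h₀)).2 <| Fin.forall_fin_two.2 ⟨h₀, h₁⟩

lemma log_norm_mul_div {u w z : ℂ} (hu : u ≠ 0) (hw : w ≠ 0) (hz : z ≠ 0) :
    log ‖u * w / z‖ = log ‖u‖ + log ‖w‖ - log ‖z‖ := by
  rw [norm_div, norm_mul, log_div (by positivity) (by positivity),
    log_mul (by positivity) (by positivity)]

lemma mem_stdTropLine_zero_iff {w : Fin 2 → ℝ} :
    w ∈ stdTropLine 0 ↔ w 1 = max (w 0) 0 ∨ w 0 = max (w 1) 0 := by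
  simp only [stdTropLine, ray, Matrix.smul_cons, smul_eq_mul, mul_neg, mul_one, mul_zero,
    Matrix.smul_empty, zero_add, funext_iff, Fin.forall_fin_two, Matrix.cons_val_zero,
    Matrix.cons_val_one, Matrix.cons_val_fin_one, exists_eq_right_right', mem_union, mem_ofPred_eq]
  constructor
  · rintro ((⟨t, ht, h₀, h₁⟩ | ⟨t, ht, h₀, h₁⟩) | ⟨h₁, h₀₁⟩) <;> grind
  · rintro (h | h)
    · rcases le_total (w 0) 0 with h₀ | h₀
      · exact .inl (.inl ⟨-w 0, by linarith, by ring, by grind⟩)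
      · grind
    · rcases le_total (w 1) 0 with h₁ | h₁
      · exact .inl (.inr ⟨-w 1, by linarith, by grind, by ring⟩)
      · grind

lemma log_le_log_two_add_max {p q r : ℝ} (hp : 0 < p) (hpqr : p ≤ q + r) :
    log p ≤ log 2 + max (log q) (log r) := by
  have hlog_le (s : ℝ) (hs : p ≤ 2 * s) : log p ≤ log 2 + log s := by
    rw [← log_mul two_ne_zero (by linarith)]
    exact log_le_log hp hs
  rcases le_total q r with h | h
  · linarith [hlog_le r (by linarith), le_max_right (log q) (log r)]
  · linarith [hlog_le q (by linarith), le_max_left (log q) (log r)]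

lemma abs_log_one_add_exp_sub_max_le (s : ℝ) : |log (1 + exp s) - max s 0| ≤ log 2 := by
  have hpos : 0 < 1 + exp s := by positivity
  have lower : max s 0 ≤ log (1 + exp s) := (le_log_iff_exp_le hpos).2 <| by
    rcases le_total s 0 with h | h <;> simp [h, (exp_pos s).le]
  have h₁ : 1 ≤ exp (max s 0) := one_le_exp (le_max_right s 0)
  have h₂ : exp s ≤ exp (max s 0) := exp_le_exp.2 (le_max_left s 0)
  have upper : log (1 + exp s) ≤ log 2 + max s 0 := by
    rw [log_le_iff_le_exp hpos, exp_add, exp_log two_pos]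
    linarith
  rw [abs_le]
  constructor <;> linarith [log_nonneg one_le_two]

lemma exists_mem_stdTropLine_zero_norm_sub_le {x y δ : ℝ} (hx : x ≤ δ + max 0 y)
    (hy : y ≤ δ + max 0 x) (h0 : 0 ≤ δ + max x y) :
    ∃ w ∈ stdTropLine 0, ‖![x, y] - w‖ ≤ δ := by
  rcases le_total x y with hxy | hxy
  · rcases le_total x 0 with hx0 | hx0
    · refine ⟨![x, 0], mem_stdTropLine_zero_iff.2 <| .inl (max_eq_right hx0).symm,
        norm_le_of_abs_le_fin_two ?_ ?_⟩ <;> simp [abs_le] <;> grind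
    · refine ⟨![y, y], mem_stdTropLine_zero_iff.2 <| .inl (max_eq_left (hx0.trans hxy)).symm,
        norm_le_of_abs_le_fin_two ?_ ?_⟩ <;> simp [abs_le] <;> grind
  · rcases le_total y 0 with hy0 | hy0
    · refine ⟨![0, y], mem_stdTropLine_zero_iff.2 <| .inr (max_eq_right hy0).symm,
        norm_le_of_abs_le_fin_two ?_ ?_⟩ <;> simp [abs_le] <;> grind
    · refine ⟨![x, x], mem_stdTropLine_zero_iff.2 <| .inl (max_eq_left (hy0.trans hxy)).symm,
        norm_le_of_abs_le_fin_two ?_ ?_⟩ <;> simp [abs_le] <;> grind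

lemma exists_mem_stdTropLine_zero_norm_logMap_sub_le {q : Fin 2 → ℂ}
    (hq : q ∈ affineLine 1 1 1) :
    ∃ w ∈ stdTropLine 0, ‖LogMap q - w‖ ≤ log 2 := by
  obtain ⟨hq₀, hq₁, hsum⟩ := hq
  rw [one_mul, one_mul] at hsum
  have hLog : LogMap q = ![log ‖q 0‖, log ‖q 1‖] := by
    ext i; fin_cases i <;> rfl
  have h₀ : ‖q 0‖ ≤ ‖(1 : ℂ)‖ + ‖q 1‖ := by
    rw [eq_sub_of_add_eq hsum]; exact norm_sub_le _ _
  have h₁ : ‖q 1‖ ≤ ‖(1 : ℂ)‖ + ‖q 0‖ := by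
    rw [eq_sub_of_add_eq' hsum]; exact norm_sub_le _ _
  have h₂ : ‖(1 : ℂ)‖ ≤ ‖q 0‖ + ‖q 1‖ := hsum ▸ norm_add_le _ _
  rw [hLog]
  apply exists_mem_stdTropLine_zero_norm_sub_le
  · simpa using log_le_log_two_add_max (norm_pos_iff.2 hq₀) h₀
  · simpa using log_le_log_two_add_max (norm_pos_iff.2 hq₁) h₁
  · simpa using log_le_log_two_add_max one_pos (by simpa using h₂)

lemma norm_one_add_exp_ofReal (s : ℝ) : ‖1 + Complex.exp s‖ = 1 + exp s := by
  rw [← Complex.ofReal_exp, ← Complex.ofReal_one, ← Complex.ofReal_add, Complex.norm_real,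
    Real.norm_of_nonneg (by positivity)]

lemma one_add_exp_ofReal_ne_zero (s : ℝ) : 1 + Complex.exp s ≠ 0 :=
  norm_ne_zero_iff.1 <| by rw [norm_one_add_exp_ofReal]; positivity

lemma logMap_neg_exp_one_add_exp (s : ℝ) :
    LogMap ![-Complex.exp s, 1 + Complex.exp s] = ![s, log (1 + exp s)] := by
  ext i; fin_cases i <;> simp [LogMap, norm_one_add_exp_ofReal]

lemma logMap_one_add_exp_neg_exp (s : ℝ) :
    LogMap ![1 + Complex.exp s, -Complex.exp s] = ![log (1 + exp s), s] := by
  ext i; fin_cases i <;> simp [LogMap, norm_one_add_exp_ofReal]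

lemma exists_mem_affineLine_norm_sub_logMap_le {w : Fin 2 → ℝ} (hw : w ∈ stdTropLine 0) :
    ∃ q ∈ affineLine 1 1 1, ‖w - LogMap q‖ ≤ log 2 := by
  have hlog2 := (log_pos one_lt_two).le
  rcases mem_stdTropLine_zero_iff.1 hw with h | h
  · refine ⟨![-Complex.exp (w 0), 1 + Complex.exp (w 0)],
      ⟨by simp [Complex.exp_ne_zero], by simp [one_add_exp_ofReal_ne_zero], by simp⟩, ?_⟩
    rw [logMap_neg_exp_one_add_exp]
    refine norm_le_of_abs_le_fin_two (by simpa using hlog2) ?_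
    simpa [h, abs_sub_comm] using abs_log_one_add_exp_sub_max_le (w 0)
  · refine ⟨![1 + Complex.exp (w 1), -Complex.exp (w 1)],
      ⟨by simp [one_add_exp_ofReal_ne_zero], by simp [Complex.exp_ne_zero], by simp⟩, ?_⟩
    rw [logMap_one_add_exp_neg_exp]
    refine norm_le_of_abs_le_fin_two ?_ (by simpa using hlog2)
    simpa [h, abs_sub_comm] using abs_log_one_add_exp_sub_max_le (w 1)

lemma logMap_image_affineLine {a b c : ℂ} (ha : a ≠ 0) (hb : b ≠ 0) (hc : c ≠ 0) :
    LogMap '' affineLine a b c =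
      (![log ‖c‖ - log ‖a‖, log ‖c‖ - log ‖b‖] + ·) '' (LogMap '' affineLine 1 1 1) := by
  ext y
  constructor
  · rintro ⟨p, ⟨hp₀, hp₁, hp⟩, rfl⟩
    refine ⟨_, ⟨![a * p 0 / c, b * p 1 / c], ⟨by simp [*], by simp [*], ?_⟩, rfl⟩, ?_⟩
    · simp only [Matrix.cons_val_zero, Matrix.cons_val_one, one_mul]
      rw [← add_div, hp, div_self hc]
    · ext i; fin_cases i
      · simp only [LogMap, Pi.add_apply, Fin.zero_eta, Matrix.cons_val_zero]
        rw [log_norm_mul_div ha hp₀ hc]; ring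
      · simp only [LogMap, Pi.add_apply, Fin.mk_one, Matrix.cons_val_one, Matrix.cons_val_zero]
        rw [log_norm_mul_div hb hp₁ hc]; ring
  · rintro ⟨_, ⟨q, ⟨hq₀, hq₁, hq⟩, rfl⟩, rfl⟩
    refine ⟨![q 0 * c / a, q 1 * c / b], ⟨by simp [*], by simp [*], ?_⟩, ?_⟩
    · simp only [Matrix.cons_val_zero, Matrix.cons_val_one, one_mul] at hq ⊢
      rw [mul_div_cancel₀ _ ha, mul_div_cancel₀ _ hb, ← add_mul, hq, one_mul]
    · ext i; fin_cases i
      · simp only [LogMap, Pi.add_apply, Fin.zero_eta, Matrix.cons_val_zero]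
        rw [log_norm_mul_div hq₀ hc ha]; ring
      · simp only [LogMap, Pi.add_apply, Fin.mk_one, Matrix.cons_val_one, Matrix.cons_val_zero]
        rw [log_norm_mul_div hq₁ hc hb]; ring

/-- For `a, b, c ∈ ℂ∖{0}` and the line `L = {ax + by = c}` in `(ℂ*)²`,
with `v = (log|c| - log|a|, log|c| - log|b|)`, the amoeba of `L` lies in the
`2 log 2`-neighbourhood of the tropical line `Γ_v`, and `Γ_v` lies in the
`4 log 2`-neighbourhood of the amoeba. -/
theorem stmt_2 (a b c : ℂ) (ha : a ≠ 0) (hb : b ≠ 0) (hc : c ≠ 0) :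
    LogMap '' {p : Fin 2 → ℂ | p 0 ≠ 0 ∧ p 1 ≠ 0 ∧ a * p 0 + b * p 1 = c}
        ⊆ nbhd (2 * Real.log 2)
          (stdTropLine ![Real.log (‖c‖) - Real.log (‖a‖),
                         Real.log (‖c‖) - Real.log (‖b‖)]) ∧
    stdTropLine ![Real.log (‖c‖) - Real.log (‖a‖),
                  Real.log (‖c‖) - Real.log (‖b‖)]
        ⊆ nbhd (4 * Real.log 2)
          (LogMap '' {p : Fin 2 → ℂ | p 0 ≠ 0 ∧ p 1 ≠ 0 ∧ a * p 0 + b * p 1 = c}) := by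
  have hlog2 := log_pos one_lt_two
  change LogMap '' affineLine a b c ⊆ _ ∧ _ ⊆ nbhd _ (LogMap '' affineLine a b c)
  rw [logMap_image_affineLine ha hb hc, stdTropLine_eq_image_add, nbhd_image_add, nbhd_image_add]
  constructor
  · refine image_mono (subset_nbhd_of_forall_norm_sub_le ?_ (by linarith))
    rintro _ ⟨q, hq, rfl⟩
    exact exists_mem_stdTropLine_zero_norm_logMap_sub_le hq
  · refine image_mono (subset_nbhd_of_forall_norm_sub_le ?_ (by linarith))
    intro w hw
    obtain ⟨q, hq, hwq⟩ := exists_mem_affineLine_norm_sub_logMap_le hw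
    exact ⟨LogMap q, mem_image_of_mem _ hq, hwq⟩
end

section
/- Let α₁ ≠ α₂ ∈ ℂ, κ₁, κ₂ ∈ ℂ∖{0}, and let L ⊆ (ℂ∖{0})² be the image of the map z ↦ (κ₁(z−α₁), κ₂(z−α₂)) defined on ℂ∖{α₁,α₂}. Then there exists a point v ∈ ℝ² and a map φ : L → Γ_v such that ‖Log(q) − φ(q)‖_∞ ≤ 2 log 2 for every q ∈ L. Moreover, if κ₁ = κ₂, then v can be chosen on the diagonal {(t,t) : t ∈ ℝ}. -/
/-!
Write `r = |z - α₁|`, `s = |z - α₂|`, `c = |α₂ - α₁|` and take the vertex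
`v = Log(κ₁(α₂ - α₁), κ₂(α₂ - α₁))`, so that `Log q - v = (log r - log c, log s - log c)`. Since `r, s, c` are the sides of a
triangle, each is at most twice the larger of the other two, so the two largest of
`log r, log s, log c` differ by at most `log 2`. A point `v + (a, b)` whose two largest
coordinates among `a, b, 0` differ by at most `δ` lies within sup-distance `δ` of `Γ_v`:
move it vertically or horizontally onto the ray of `Γ_v` singled out by where the maximum
is attained.
-/

open Real

noncomputable def stdTropLineProj (v x : Fin 2 → ℝ) : Fin 2 → ℝ :=
  if x 0 - v 0 ≤ x 1 - v 1 then
    if x 0 ≤ v 0 then ![x 0, v 1] else ![x 0, v 1 + (x 0 - v 0)]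
  else
    if x 1 ≤ v 1 then ![v 0, x 1] else ![v 0 + (x 1 - v 1), x 1]

lemma stdTropLineProj_mem (v x : Fin 2 → ℝ) : stdTropLineProj v x ∈ stdTropLine v := by
  unfold stdTropLineProj stdTropLine ray
  split_ifs
  · exact .inl <| .inl ⟨v 0 - x 0, by linarith, by ext i; fin_cases i <;> simp⟩
  · exact .inr ⟨x 0 - v 0, by linarith, by ext i; fin_cases i <;> simp⟩
  · exact .inl <| .inr ⟨v 1 - x 1, by linarith, by ext i; fin_cases i <;> simp⟩
  · exact .inr ⟨x 1 - v 1, by linarith, by ext i; fin_cases i <;> simp⟩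

lemma norm_fin_two_le {y : Fin 2 → ℝ} {δ : ℝ} (h₀ : |y 0| ≤ δ) (h₁ : |y 1| ≤ δ) :
    ‖y‖ ≤ δ :=
  (pi_norm_le_iff_of_nonneg ((abs_nonneg _).trans h₀)).2 (Fin.forall_fin_two.2 ⟨h₀, h₁⟩)

lemma norm_sub_stdTropLineProj_le {v x : Fin 2 → ℝ} {p₀ p₁ p₂ δ : ℝ}
    (hx₀ : x 0 - v 0 = p₀ - p₂) (hx₁ : x 1 - v 1 = p₁ - p₂)
    (h₀ : p₀ ≤ max p₁ p₂ + δ) (h₁ : p₁ ≤ max p₀ p₂ + δ) (h₂ : p₂ ≤ max p₀ p₁ + δ) :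
    ‖x - stdTropLineProj v x‖ ≤ δ := by
  simp only [max_def] at h₀ h₁ h₂
  unfold stdTropLineProj
  split_ifs at h₀ h₁ h₂ ⊢ <;>
    refine norm_fin_two_le (abs_le.2 ⟨?_, ?_⟩) (abs_le.2 ⟨?_, ?_⟩) <;> simp <;> linarith

lemma log_le_max_log_add_log_two {r s c : ℝ} (hr : 0 < r) (h : r ≤ s + c) :
    log r ≤ max (log s) (log c) + log 2 := by
  have hmax : 0 < max s c := by linarith [le_max_left s c, le_max_right s c]
  have hlog_max : log (max s c) ≤ max (log s) (log c) := by
    rcases max_choice s c with h | h <;> rw [h] <;> simp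
  calc log r ≤ log (2 * max s c) :=
        log_le_log hr (by linarith [le_max_left s c, le_max_right s c])
    _ = log (max s c) + log 2 := by rw [log_mul two_ne_zero hmax.ne', add_comm]
    _ ≤ max (log s) (log c) + log 2 := by linarith

lemma log_norm_mul_sub_log_norm_mul {𝕜 : Type*} [NormedDivisionRing 𝕜] {κ w d : 𝕜}
    (hκ : κ ≠ 0) (hw : w ≠ 0) (hd : d ≠ 0) :
    log ‖κ * w‖ - log ‖κ * d‖ = log ‖w‖ - log ‖d‖ := by
  rw [norm_mul, norm_mul, log_mul (norm_ne_zero_iff.2 hκ) (norm_ne_zero_iff.2 hw),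
    log_mul (norm_ne_zero_iff.2 hκ) (norm_ne_zero_iff.2 hd)]
  ring

/-- For the complex line `L ⊆ (ℂ*)²` parametrised by
`z ↦ (κ₁(z-α₁), κ₂(z-α₂))` there exist a vertex `v ∈ ℝ²` and a map `φ : L → Γ_v`
with `‖Log(q) - φ(q)‖_∞ ≤ 2 log 2` for all `q ∈ L`; moreover if `κ₁ = κ₂`
(calibrated case) then `v` can be chosen on the diagonal. -/
theorem stmt_3 (α₁ α₂ : ℂ) (hα : α₁ ≠ α₂) (κ₁ κ₂ : ℂ) (hκ₁ : κ₁ ≠ 0) (hκ₂ : κ₂ ≠ 0) :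
    ∃ (v : Fin 2 → ℝ) (φ : (Fin 2 → ℂ) → (Fin 2 → ℝ)),
      (∀ q ∈ (fun z : ℂ => ![κ₁ * (z - α₁), κ₂ * (z - α₂)]) ''
          {z : ℂ | z ≠ α₁ ∧ z ≠ α₂},
        φ q ∈ stdTropLine v ∧ ‖LogMap q - φ q‖ ≤ 2 * Real.log 2) ∧
      (κ₁ = κ₂ → v 0 = v 1) := by
  set v := LogMap ![κ₁ * (α₂ - α₁), κ₂ * (α₂ - α₁)]
  refine ⟨v, fun q => stdTropLineProj v (LogMap q), ?_, fun h => by subst h; rfl⟩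
  rintro _ ⟨z, ⟨hz₁, hz₂⟩, rfl⟩
  have hd : α₂ - α₁ ≠ 0 := sub_ne_zero.2 hα.symm
  have ha : LogMap ![κ₁ * (z - α₁), κ₂ * (z - α₂)] 0 - v 0 = log ‖z - α₁‖ - log ‖α₂ - α₁‖ :=
    log_norm_mul_sub_log_norm_mul hκ₁ (sub_ne_zero.2 hz₁) hd
  have hb : LogMap ![κ₁ * (z - α₁), κ₂ * (z - α₂)] 1 - v 1 = log ‖z - α₂‖ - log ‖α₂ - α₁‖ :=
    log_norm_mul_sub_log_norm_mul hκ₂ (sub_ne_zero.2 hz₂) hd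
  have hr : log ‖z - α₁‖ ≤ max (log ‖z - α₂‖) (log ‖α₂ - α₁‖) + log 2 :=
    log_le_max_log_add_log_two (norm_pos_iff.2 (sub_ne_zero.2 hz₁))
      (norm_sub_le_norm_sub_add_norm_sub z α₂ α₁)
  have hs : log ‖z - α₂‖ ≤ max (log ‖z - α₁‖) (log ‖α₂ - α₁‖) + log 2 :=
    log_le_max_log_add_log_two (norm_pos_iff.2 (sub_ne_zero.2 hz₂))
      (by simpa [norm_sub_rev α₁] using norm_sub_le_norm_sub_add_norm_sub z α₁ α₂)
  have hc : log ‖α₂ - α₁‖ ≤ max (log ‖z - α₁‖) (log ‖z - α₂‖) + log 2 :=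
    log_le_max_log_add_log_two (norm_pos_iff.2 hd)
      (by simpa [norm_sub_rev α₂, add_comm] using norm_sub_le_norm_sub_add_norm_sub α₂ z α₁)
  exact ⟨stdTropLineProj_mem _ _, (norm_sub_stdTropLineProj_le ha hb hr hs hc).trans
    (by linarith [log_nonneg one_le_two])⟩
end

section
/- Let α₁ ≠ α₂ ∈ ℂ, κ₁, κ₂ ∈ ℂ∖{0}, and let L ⊆ (ℂ∖{0})² be the image of the map z ↦ (κ₁(z−α₁), κ₂(z−α₂)) defined on ℂ∖{α₁,α₂}. Then there exist v ∈ ℝ² and a map φ : L → Γ_v such that ‖Log(q) − φ(q)‖_∞ ≤ 2 log 2 for every q ∈ L, and in addition Γ_v ∖ U_{2 log 2}({v}) ⊆ φ(L). -/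
/-!
Substituting `z = α₁ + (α₂ - α₁) w` turns the line into `w ↦ (μ₁ w, μ₂ (w - 1))` with
`μᵢ = κᵢ (α₂ - α₁)`, so that `Log q = v + (log |w|, log |w - 1|)` for `v = Log (μ₁, μ₂)`.
The spine map retracts `(log |w|, log |w - 1|)` onto the leg `(-1, 0)` of `Γ₀` when
`|w| ≤ 1/2`, onto the leg `(0, -1)` when `|w - 1| ≤ 1/2`, and onto the diagonal otherwise.
Since `|w|`, `|w - 1|` and `1` are the sides of a triangle, in each regime the discarded
coordinates lie in `[-log 4, log 4]`. Conversely the real points `w = e^{-t}`, `1 - e^{-t}`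
and `e^t` are mapped to the point at distance `t` on the three legs once `t > log 2`.
-/

open Real

lemma abs_log_le_log_of_inv_le_of_le {x K : ℝ} (hK : 0 < K) (h₁ : K⁻¹ ≤ x) (h₂ : x ≤ K) :
    |log x| ≤ log K := by
  have hx : 0 < x := (inv_pos.mpr hK).trans_le h₁
  refine abs_le.mpr ⟨?_, log_le_log hx h₂⟩
  rw [← log_inv]
  exact log_le_log (inv_pos.mpr hK) h₁

lemma log_le_neg_log_two_iff {x : ℝ} (hx : 0 < x) : log x ≤ -log 2 ↔ x ≤ 1 / 2 := by
  rw [← log_inv, log_le_log_iff hx (by norm_num), one_div]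

lemma norm_vecTwo_sub_le_iff {x y x' y' r : ℝ} (hr : 0 ≤ r) :
    ‖(![x, y] : Fin 2 → ℝ) - ![x', y']‖ ≤ r ↔ |x - x'| ≤ r ∧ |y - y'| ≤ r := by
  simp [pi_norm_le_iff_of_nonneg hr, Fin.forall_fin_two]

lemma notMem_nbhd_singleton_iff {n : ℕ} {ε : ℝ} {x v : Fin n → ℝ} :
    x ∉ nbhd ε {v} ↔ ε ≤ ‖x - v‖ := by
  simp [nbhd]

noncomputable def spine (p : Fin 2 → ℝ) : Fin 2 → ℝ :=
  if p 0 ≤ -log 2 then ![p 0, 0]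
  else if p 1 ≤ -log 2 then ![0, p 1]
  else max 0 (p 0) • ![1, 1]

lemma add_spine_mem_stdTropLine (v p : Fin 2 → ℝ) : v + spine p ∈ stdTropLine v := by
  have hlog2 : 0 < log 2 := log_pos one_lt_two
  unfold spine stdTropLine ray
  split_ifs with h₀ h₁
  · refine Or.inl (Or.inl ⟨-p 0, by linarith, ?_⟩)
    funext i; fin_cases i <;> simp
  · refine Or.inl (Or.inr ⟨-p 1, by linarith, ?_⟩)
    funext i; fin_cases i <;> simp
  · exact Or.inr ⟨_, le_max_left _ _, rfl⟩

lemma norm_sub_spine_le {a b : ℝ} (ha : 0 < a) (hb : 0 < b) (hab : a ≤ b + 1)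
    (hba : b ≤ a + 1) (h₁ : 1 ≤ a + b) :
    ‖![log a, log b] - spine ![log a, log b]‖ ≤ 2 * log 2 := by
  have hlog4 : 2 * log 2 = log 4 := by
    rw [show (4 : ℝ) = 2 ^ 2 by norm_num, log_pow]; norm_num
  have hbound : ∀ {x}, 4⁻¹ ≤ x → x ≤ 4 → |log x| ≤ log 4 :=
    abs_log_le_log_of_inv_le_of_le (by norm_num)
  have h4 : (0 : ℝ) ≤ log 4 := log_nonneg (by norm_num)
  rw [hlog4]
  unfold spine
  simp only [Matrix.cons_val_zero, Matrix.cons_val_one, Matrix.cons_val_fin_one,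
    log_le_neg_log_two_iff ha, log_le_neg_log_two_iff hb]
  split_ifs with hA hB
  · rw [norm_vecTwo_sub_le_iff h4, sub_self, sub_zero, abs_zero]
    exact ⟨h4, hbound (by linarith) (by linarith)⟩
  · rw [norm_vecTwo_sub_le_iff h4, sub_self, sub_zero, abs_zero]
    exact ⟨hbound (by linarith) (by linarith), h4⟩
  · simp only [Matrix.smul_cons, smul_eq_mul, mul_one, Matrix.smul_empty,
      norm_vecTwo_sub_le_iff h4]
    rcases le_or_gt a 1 with ha₁ | ha₁
    · rw [max_eq_left (log_nonpos ha.le ha₁), sub_zero, sub_zero]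
      exact ⟨hbound (by linarith) (by linarith), hbound (by linarith) (by linarith)⟩
    · rw [max_eq_right (log_nonneg ha₁.le), sub_self, abs_zero, ← log_div hb.ne' ha.ne']
      refine ⟨h4, hbound ?_ ?_⟩
      · rw [le_div_iff₀ ha]; linarith
      · rw [div_le_iff₀ ha]; linarith

lemma logMap_vecTwo (z₁ z₂ : ℂ) : LogMap ![z₁, z₂] = ![log ‖z₁‖, log ‖z₂‖] := by
  funext i; fin_cases i <;> rfl

lemma logMap_ofReal_vecTwo (r : ℝ) : LogMap ![(r : ℂ), r - 1] = ![log r, log (r - 1)] := by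
  rw [logMap_vecTwo, ← Complex.ofReal_one, ← Complex.ofReal_sub, Complex.norm_real,
    Complex.norm_real, norm_eq_abs, norm_eq_abs, log_abs, log_abs]

lemma logMap_mul {n : ℕ} {z z' : Fin n → ℂ} (hz : ∀ i, z i ≠ 0) (hz' : ∀ i, z' i ≠ 0) :
    LogMap (z * z') = LogMap z + LogMap z' := by
  funext i
  simp only [LogMap, Pi.mul_apply, Pi.add_apply, norm_mul]
  exact log_mul (norm_ne_zero_iff.mpr (hz i)) (norm_ne_zero_iff.mpr (hz' i))

lemma norm_logMap_sub_spine_le {w : ℂ} (hw₀ : w ≠ 0) (hw₁ : w ≠ 1) :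
    ‖LogMap ![w, w - 1] - spine (LogMap ![w, w - 1])‖ ≤ 2 * log 2 := by
  rw [logMap_vecTwo]
  refine norm_sub_spine_le (norm_pos_iff.mpr hw₀) (norm_pos_iff.mpr (sub_ne_zero.mpr hw₁))
    ?_ ?_ ?_
  · simpa using norm_le_norm_add_norm_sub' w (w - 1)
  · simpa using norm_sub_le w 1
  · simpa using norm_sub_le w (w - 1)

lemma spine_logMap_exp_neg {t : ℝ} (ht : log 2 ≤ t) :
    spine (LogMap ![(exp (-t) : ℂ), exp (-t) - 1]) = t • ![-1, 0] := by
  rw [logMap_ofReal_vecTwo, spine, if_pos (by simpa using ht)]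
  simp

lemma spine_logMap_one_sub_exp_neg {t : ℝ} (ht : log 2 < t) :
    spine (LogMap ![((1 - exp (-t) : ℝ) : ℂ), ((1 - exp (-t) : ℝ) : ℂ) - 1]) = t • ![0, -1] := by
  have hexp : exp (-t) < 1 / 2 :=
    calc exp (-t) < exp (-log 2) := exp_lt_exp.mpr (neg_lt_neg ht)
      _ = 1 / 2 := by rw [exp_neg, exp_log two_pos, one_div]
  rw [logMap_ofReal_vecTwo, spine, if_neg, if_pos]
  · simp
  · simpa using ht.le
  · rw [Matrix.cons_val_zero, log_le_neg_log_two_iff (by linarith)]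
    linarith

lemma spine_logMap_exp {t : ℝ} (ht : log 2 < t) :
    spine (LogMap ![(exp t : ℂ), exp t - 1]) = t • ![1, 1] := by
  have hexp : 2 < exp t := by
    rw [← exp_log two_pos]; exact exp_lt_exp.mpr ht
  have hlog2 : 0 < log 2 := log_pos one_lt_two
  rw [logMap_ofReal_vecTwo, spine, if_neg, if_neg]
  · simp [max_eq_right (hlog2.trans ht).le]
  · rw [Matrix.cons_val_one, Matrix.cons_val_zero, log_le_neg_log_two_iff (by linarith)]
    linarith
  · rw [Matrix.cons_val_zero, log_exp]
    linarith

lemma norm_add_smul_sub_self_le {n : ℕ} {v d : Fin n → ℝ} {t : ℝ} (ht : 0 ≤ t) (hd : ‖d‖ ≤ 1) :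
    ‖v + t • d - v‖ ≤ t := by
  rw [add_sub_cancel_left, norm_smul, norm_of_nonneg ht]
  exact mul_le_of_le_one_right ht hd

lemma exists_add_spine_eq {v x : Fin 2 → ℝ} (hx : x ∈ stdTropLine v) (hxv : log 2 < ‖x - v‖) :
    ∃ w : ℂ, w ≠ 0 ∧ w ≠ 1 ∧ v + spine (LogMap ![w, w - 1]) = x := by
  have hlog2 : 0 < log 2 := log_pos one_lt_two
  have hdir : ∀ a b : ℝ, |a| ≤ 1 → |b| ≤ 1 → ‖(![a, b] : Fin 2 → ℝ)‖ ≤ 1 := fun a b ha hb =>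
    (pi_norm_le_iff_of_nonneg zero_le_one).mpr (by simpa [Fin.forall_fin_two] using ⟨ha, hb⟩)
  rcases hx with (⟨t, ht, rfl⟩ | ⟨t, ht, rfl⟩) | ⟨t, ht, rfl⟩
  all_goals
    have ht' : log 2 < t :=
      hxv.trans_le (norm_add_smul_sub_self_le ht (hdir _ _ (by norm_num) (by norm_num)))
  · refine ⟨exp (-t), ?_, ?_, by rw [spine_logMap_exp_neg ht'.le]⟩
    · exact_mod_cast (exp_pos _).ne'
    · exact_mod_cast (exp_lt_one_iff.mpr (by linarith)).ne
  · refine ⟨(1 - exp (-t) : ℝ), ?_, ?_, by rw [spine_logMap_one_sub_exp_neg ht']⟩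
    · exact_mod_cast (sub_pos.mpr (exp_lt_one_iff.mpr (by linarith))).ne'
    · exact_mod_cast (sub_lt_self 1 (exp_pos (-t))).ne
  · refine ⟨exp t, ?_, ?_, by rw [spine_logMap_exp ht']⟩
    · exact_mod_cast (exp_pos _).ne'
    · exact_mod_cast (one_lt_exp_iff.mpr (by linarith)).ne'

lemma logMap_line {μ₁ μ₂ w : ℂ} (hμ₁ : μ₁ ≠ 0) (hμ₂ : μ₂ ≠ 0) (hw₀ : w ≠ 0) (hw₁ : w ≠ 1) :
    LogMap ![μ₁ * w, μ₂ * (w - 1)] = LogMap ![μ₁, μ₂] + LogMap ![w, w - 1] := by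
  have hmul : ![μ₁ * w, μ₂ * (w - 1)] = ![μ₁, μ₂] * ![w, w - 1] := by
    funext i; fin_cases i <;> rfl
  rw [hmul, logMap_mul] <;> simp [Fin.forall_fin_two, *, sub_ne_zero]

lemma image_line_eq {α₁ α₂ : ℂ} (hα : α₁ ≠ α₂) (κ₁ κ₂ : ℂ) :
    (fun z : ℂ => ![κ₁ * (z - α₁), κ₂ * (z - α₂)]) '' {z | z ≠ α₁ ∧ z ≠ α₂} =
      (fun w : ℂ => ![κ₁ * (α₂ - α₁) * w, κ₂ * (α₂ - α₁) * (w - 1)]) ''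
        {w | w ≠ 0 ∧ w ≠ 1} := by
  have hd : α₂ - α₁ ≠ 0 := sub_ne_zero.mpr hα.symm
  ext q
  constructor
  · rintro ⟨z, ⟨hz₁, hz₂⟩, rfl⟩
    refine ⟨(z - α₁) / (α₂ - α₁), ⟨div_ne_zero (sub_ne_zero.mpr hz₁) hd, ?_⟩, ?_⟩
    · rw [Ne, div_eq_one_iff_eq hd, sub_left_inj]; exact hz₂
    · field_simp
      ring_nf
  · rintro ⟨w, ⟨hw₀, hw₁⟩, rfl⟩
    refine ⟨α₁ + (α₂ - α₁) * w, ⟨?_, ?_⟩, ?_⟩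
    · simpa [hd] using hw₀
    · intro h
      exact hw₁ (mul_left_cancel₀ hd (by linear_combination h))
    · ring_nf

theorem exists_spine_of_line {μ₁ μ₂ : ℂ} (hμ₁ : μ₁ ≠ 0) (hμ₂ : μ₂ ≠ 0) :
    ∃ (v : Fin 2 → ℝ) (φ : (Fin 2 → ℂ) → (Fin 2 → ℝ)),
      (∀ q ∈ (fun w : ℂ => ![μ₁ * w, μ₂ * (w - 1)]) '' {w | w ≠ 0 ∧ w ≠ 1},
        φ q ∈ stdTropLine v ∧ ‖LogMap q - φ q‖ ≤ 2 * log 2) ∧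
      stdTropLine v \ nbhd (2 * log 2) {v}
        ⊆ φ '' ((fun w : ℂ => ![μ₁ * w, μ₂ * (w - 1)]) '' {w | w ≠ 0 ∧ w ≠ 1}) := by
  refine ⟨LogMap ![μ₁, μ₂], fun q => LogMap ![μ₁, μ₂] + spine (LogMap q - LogMap ![μ₁, μ₂]),
    ?_, ?_⟩
  · rintro _ ⟨w, ⟨hw₀, hw₁⟩, rfl⟩
    dsimp only
    rw [logMap_line hμ₁ hμ₂ hw₀ hw₁, add_sub_cancel_left, add_sub_add_left_eq_sub]
    exact ⟨add_spine_mem_stdTropLine _ _, norm_logMap_sub_spine_le hw₀ hw₁⟩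
  · rintro x ⟨hx, hxv⟩
    have hlog2 : 0 < log 2 := log_pos one_lt_two
    obtain ⟨w, hw₀, hw₁, rfl⟩ :=
      exists_add_spine_eq hx ((lt_two_mul_self hlog2).trans_le (notMem_nbhd_singleton_iff.mp hxv))
    exact ⟨_, ⟨w, ⟨hw₀, hw₁⟩, rfl⟩, by simp only [logMap_line hμ₁ hμ₂ hw₀ hw₁, add_sub_cancel_left]⟩

/-- For the complex line `L ⊆ (ℂ*)²` parametrised by
`z ↦ (κ₁(z-α₁), κ₂(z-α₂))` there exist `v ∈ ℝ²` and a map `φ : L → Γ_v` with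
`‖Log(q) - φ(q)‖_∞ ≤ 2 log 2` for all `q ∈ L`, such that moreover
`Γ_v ∖ U_{2 log 2}({v}) ⊆ φ(L)`. -/
theorem stmt_4 (α₁ α₂ : ℂ) (hα : α₁ ≠ α₂) (κ₁ κ₂ : ℂ) (hκ₁ : κ₁ ≠ 0) (hκ₂ : κ₂ ≠ 0) :
    ∃ (v : Fin 2 → ℝ) (φ : (Fin 2 → ℂ) → (Fin 2 → ℝ)),
      (∀ q ∈ (fun z : ℂ => ![κ₁ * (z - α₁), κ₂ * (z - α₂)]) ''
          {z : ℂ | z ≠ α₁ ∧ z ≠ α₂},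
        φ q ∈ stdTropLine v ∧ ‖LogMap q - φ q‖ ≤ 2 * Real.log 2) ∧
      stdTropLine v \ nbhd (2 * Real.log 2) {v}
        ⊆ φ '' ((fun z : ℂ => ![κ₁ * (z - α₁), κ₂ * (z - α₂)]) ''
            {z : ℂ | z ≠ α₁ ∧ z ≠ α₂}) := by
  have hd : α₂ - α₁ ≠ 0 := sub_ne_zero.mpr hα.symm
  rw [image_line_eq hα]
  exact exists_spine_of_line (mul_ne_zero hκ₁ hd) (mul_ne_zero hκ₂ hd)
end

section
/- Let n, k ≥ 1 and let δ₁, …, δ_k ∈ ℤⁿ span ℝⁿ. Let α₁, …, α_k ∈ ℂ be pairwise distinct and κ₁, …, κₙ ∈ ℂ∖{0}. Then there exist λ₁, …, λ_k ∈ ℂ∖{0} such that for every z ∈ ℂ∖{α₁,…,α_k} and every j ∈ {1,…,n}: κ_j · ∏_{i=1}^{k}(z−α_i)^{−δ_i^j} = ∏_{i=1}^{k} (λ_i·(z−α_i))^{−δ_i^j}. -/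
/-- If `δ₁, …, δ_k ∈ ℤⁿ` span `ℝⁿ`, `α₁, …, α_k ∈ ℂ` are pairwise
distinct and `κ₁, …, κₙ ∈ ℂ∖{0}`, then there exist `λ₁, …, λ_k ∈ ℂ∖{0}` such that
for all `z ∉ {α₁,…,α_k}` and all `j`,
`κ_j ∏ᵢ (z - αᵢ)^{-δᵢʲ} = ∏ᵢ (λᵢ (z - αᵢ))^{-δᵢʲ}`. -/
theorem stmt_8 (n k : ℕ) (hn : 1 ≤ n) (hk : 1 ≤ k) (δ : Fin k → Fin n → ℤ)
    (hspan : Submodule.span ℝ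
      (Set.range (fun i : Fin k => (fun j : Fin n => (δ i j : ℝ)))) = ⊤)
    (α : Fin k → ℂ) (hα : Function.Injective α)
    (κ : Fin n → ℂ) (hκ : ∀ j, κ j ≠ 0) :
    ∃ lam : Fin k → ℂ, (∀ i, lam i ≠ 0) ∧
      ∀ z : ℂ, (∀ i, z ≠ α i) →
        ∀ j : Fin n,
          κ j * ∏ i : Fin k, (z - α i) ^ (-(δ i j)) =
            ∏ i : Fin k, (lam i * (z - α i)) ^ (-(δ i j)) := by
  -- the real linear map x ↦ (∑ i, x i * δ i j)_j is surjective
  have hSurj : ∀ w : Fin n → ℝ, ∃ x : Fin k → ℝ, ∀ j, (∑ i, x i * (δ i j : ℝ)) = w j := by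
    intro w
    set S : (Fin k → ℝ) →ₗ[ℝ] (Fin n → ℝ) :=
      { toFun := fun x => fun j => ∑ i, x i * (δ i j : ℝ)
        map_add' := by
          intro a b
          funext j
          simp [add_mul, Finset.sum_add_distrib]
        map_smul' := by
          intro c a
          funext j
          simp [Finset.mul_sum, mul_assoc] } with hS
    have hrange : LinearMap.range S = ⊤ := by
      rw [← top_le_iff, ← hspan, Submodule.span_le]
      rintro _ ⟨i, rfl⟩
      refine ⟨Pi.single i 1, ?_⟩
      funext j
      simp [hS, Pi.single_apply, Finset.sum_ite_eq']
    obtain ⟨x, hx⟩ := (LinearMap.range_eq_top.mp hrange) w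
    exact ⟨x, fun j => congrFun hx j⟩
  obtain ⟨x, hx⟩ := hSurj (fun j => (-(Complex.log (κ j))).re)
  obtain ⟨y, hy⟩ := hSurj (fun j => (-(Complex.log (κ j))).im)
  set μ : Fin k → ℂ := fun i => (x i : ℂ) + (y i : ℂ) * Complex.I with hμdef
  have hμ : ∀ j, (∑ i, μ i * (δ i j : ℂ)) = -(Complex.log (κ j)) := by
    intro j
    have h1 : (∑ i, μ i * (δ i j : ℂ)) =
        ((∑ i, x i * (δ i j : ℝ) : ℝ) : ℂ) + ((∑ i, y i * (δ i j : ℝ) : ℝ) : ℂ) * Complex.I := by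
      push_cast
      rw [Finset.sum_mul]
      rw [← Finset.sum_add_distrib]
      apply Finset.sum_congr rfl
      intro i _
      ring
    rw [h1, hx j, hy j, Complex.re_add_im]
  refine ⟨fun i => Complex.exp (μ i), fun i => Complex.exp_ne_zero _, ?_⟩
  intro z hz j
  have key : (∏ i : Fin k, Complex.exp (μ i) ^ (-(δ i j))) = κ j := by
    have : ∀ i : Fin k, Complex.exp (μ i) ^ (-(δ i j)) =
        Complex.exp ((-(δ i j) : ℤ) * μ i) := by
      intro i
      rw [Complex.exp_int_mul]
    rw [Finset.prod_congr rfl (fun i _ => this i), ← Complex.exp_sum]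
    have : (∑ i, ((-(δ i j) : ℤ) : ℂ) * μ i) = -(∑ i, μ i * (δ i j : ℂ)) := by
      rw [← Finset.sum_neg_distrib]
      apply Finset.sum_congr rfl
      intro i _
      push_cast
      ring
    rw [this, hμ j, neg_neg, Complex.exp_log (hκ j)]
  calc κ j * ∏ i : Fin k, (z - α i) ^ (-(δ i j))
      = (∏ i : Fin k, Complex.exp (μ i) ^ (-(δ i j))) *
        ∏ i : Fin k, (z - α i) ^ (-(δ i j)) := by rw [key]
    _ = ∏ i : Fin k, (Complex.exp (μ i) * (z - α i)) ^ (-(δ i j)) := by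
        rw [← Finset.prod_mul_distrib]
        exact Finset.prod_congr rfl fun i _ => (mul_zpow _ _ _).symm
end

section
/- Let n, k ≥ 1 and let δ₀, δ₁, …, δ_k ∈ ℤⁿ satisfy Σ_{i=0}^{k} δ_i = 0 and δ_i ≠ 0 for every i ∈ {0,1,…,k}. Let α₁, …, α_k ∈ ℂ be pairwise distinct, let κ₁, …, κₙ ∈ ℂ∖{0}, set S = ℂ∖{α₁,…,α_k}, and define f : S → (ℂ∖{0})ⁿ by f(z)_j = κ_j·∏_{i=1}^{k}(z−α_i)^{−δ_i^j}. Then the map Log ∘ f : S → ℝⁿ is proper (preimages of compact sets are compact), and in particular the amoeba Log(f(S)) is a closed subset of ℝⁿ. -/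
open Filter Topology Set Bornology

theorem cocompact_subtype_le_comap_cocompact_sup_nhdsNE {X : Type*} [TopologicalSpace X]
    (S : Set X) : cocompact S ≤ comap (↑) (cocompact X ⊔ ⨆ a ∈ Sᶜ, 𝓝[≠] a) := by
  intro W hW
  obtain ⟨U, hU, hUW⟩ := mem_comap.1 hW
  simp only [mem_sup, mem_iSup] at hU
  obtain ⟨hU_cocompact, hU_nhds⟩ := hU
  obtain ⟨K, hK, hKU⟩ := mem_cocompact.1 hU_cocompact
  have hV : Sᶜ ⊆ interior (U ∪ Sᶜ) := fun a ha =>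
    mem_interior_iff_mem_nhds.2 <| mem_of_superset (insert_mem_nhds_iff.2 (hU_nhds a ha))
      (insert_subset_iff.2 ⟨Or.inr ha, subset_union_left⟩)
  -- `K \ interior (U ∪ Sᶜ)` is a compact subset of `S` whose complement in `S` lies in `U`
  refine mem_cocompact.2 ⟨(↑) ⁻¹' (K \ interior (U ∪ Sᶜ)), ?_, fun z hz => hUW ?_⟩
  · rw [Subtype.isCompact_iff, Subtype.image_preimage_coe,
      inter_eq_right.2 fun z hz => not_not.1 fun hzS => hz.2 (hV hzS)]
    exact hK.diff isOpen_interior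
  · by_cases hzK : (z : X) ∈ K
    · have hzU := interior_subset (not_not.1 fun h => hz ⟨hzK, h⟩)
      exact hzU.resolve_right (not_not.2 z.2)
    · exact hKU hzK

theorem Filter.Tendsto.cobounded_add {α E : Type*} [SeminormedAddGroup E] {l : Filter α}
    {f g : α → E} {c : E} (hf : Tendsto f l (cobounded E)) (hg : Tendsto g l (𝓝 c)) :
    Tendsto (fun x => f x + g x) l (cobounded E) := by
  rw [← tendsto_norm_atTop_iff_cobounded] at hf ⊢
  exact tendsto_atTop_mono (fun x => norm_sub_le_norm_add (f x) (g x))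
    (hf.atTop_add hg.norm.neg)

theorem tendsto_cocompact_pi_of_apply {α ι : Type*} {X : ι → Type*}
    [∀ i, TopologicalSpace (X i)] {l : Filter α} {f : α → ∀ i, X i} (j : ι)
    (h : Tendsto (fun x => f x j) l (cocompact (X j))) :
    Tendsto f l (cocompact (∀ i, X i)) := by
  rw [← coprodᵢ_cocompact]
  exact (tendsto_comap_iff.2 h).mono_right
    (le_iSup (fun i => comap (Function.eval i) (cocompact (X i))) j)

theorem tendsto_log_norm_sub_nhdsNE {E : Type*} [NormedAddCommGroup E] (a : E) :
    Tendsto (fun z => Real.log ‖z - a‖) (𝓝[≠] a) atBot :=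
  Real.tendsto_log_nhdsGT_zero.comp (tendsto_norm_sub_self_nhdsNE a)

theorem tendsto_log_norm_sub_sub_log_norm_cobounded {𝕜 : Type*} [NormedField 𝕜] (a : 𝕜) :
    Tendsto (fun z => Real.log ‖z - a‖ - Real.log ‖z‖) (cobounded 𝕜) (𝓝 0) := by
  have h : Tendsto (fun z => Real.log ‖1 - a * z⁻¹‖) (cobounded 𝕜) (𝓝 0) := by
    have := ((tendsto_inv₀_cobounded.const_mul a).const_sub 1).norm.log (by simp)
    simpa using this
  refine h.congr' ?_
  filter_upwards [(tendsto_norm_cobounded_atTop (E := 𝕜)).eventually_gt_atTop ‖a‖] with z hz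
  have hz0 : z ≠ 0 := norm_pos_iff.1 ((norm_nonneg a).trans_lt hz)
  have hza : z - a ≠ 0 := sub_ne_zero.2 fun h => (h ▸ hz).false
  rw [← Real.log_div (norm_ne_zero_iff.2 hza) (norm_ne_zero_iff.2 hz0), ← norm_div, sub_div,
    div_self hz0, div_eq_mul_inv]

section LogCurve

variable {n k : ℕ} (δ : Fin k → Fin n → ℤ) (α : Fin k → ℂ) (κ : Fin n → ℂ)

-- At the punctures this takes the junk value `log 0 = 0` in the corresponding terms.
noncomputable def logCurve (z : ℂ) : Fin n → ℝ :=
  fun j => Real.log ‖κ j‖ - ∑ i, (δ i j : ℝ) * Real.log ‖z - α i‖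

variable {δ α κ}

theorem LogMap_eq_logCurve (hκ : ∀ j, κ j ≠ 0) {z : ℂ} (hz : ∀ i, z ≠ α i) :
    LogMap (fun j => κ j * ∏ i, (z - α i) ^ (-(δ i j))) = logCurve δ α κ z := by
  have hzα : ∀ i, ‖z - α i‖ ≠ 0 := fun i => norm_ne_zero_iff.2 (sub_ne_zero.2 (hz i))
  funext j
  simp only [LogMap, logCurve, norm_mul, norm_prod, norm_zpow]
  rw [Real.log_mul (norm_ne_zero_iff.2 (hκ j))
    (Finset.prod_ne_zero_iff.2 fun i _ => zpow_ne_zero _ (hzα i)),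
    Real.log_prod fun i _ => zpow_ne_zero _ (hzα i)]
  simp [Real.log_zpow, sub_eq_add_neg]

theorem continuousOn_logCurve : ContinuousOn (logCurve δ α κ) {z | ∀ i, z ≠ α i} :=
  continuousOn_pi.2 fun j => continuousOn_const.sub <| continuousOn_finsetSum _ fun i _ =>
    continuousOn_const.mul <| ContinuousOn.log (by fun_prop) fun z hz =>
      norm_ne_zero_iff.2 (sub_ne_zero.2 (hz i))

theorem tendsto_logCurve_nhdsNE (hα : Function.Injective α) {i₀ : Fin k} (hδ : δ i₀ ≠ 0) :
    Tendsto (logCurve δ α κ) (𝓝[≠] α i₀) (cocompact (Fin n → ℝ)) := by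
  obtain ⟨j, hj⟩ := Function.ne_iff.1 hδ
  refine tendsto_cocompact_pi_of_apply j ?_
  have hsplit : (fun z => logCurve δ α κ z j) = fun z => -(δ i₀ j : ℝ) * Real.log ‖z - α i₀‖ +
      (Real.log ‖κ j‖ - ∑ i ∈ Finset.univ.erase i₀, (δ i j : ℝ) * Real.log ‖z - α i‖) := by
    funext z
    rw [logCurve, ← Finset.add_sum_erase _ _ (Finset.mem_univ i₀)]
    ring
  have hregular : ContinuousAt (fun z => Real.log ‖κ j‖ -
      ∑ i ∈ Finset.univ.erase i₀, (δ i j : ℝ) * Real.log ‖z - α i‖) (α i₀) :=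
    continuousAt_const.sub <| tendsto_finsetSum _ fun i hi =>
      continuousAt_const.mul <| ContinuousAt.log (by fun_prop) <|
        norm_ne_zero_iff.2 (sub_ne_zero.2 fun h => (Finset.ne_of_mem_erase hi) (hα h).symm)
  rw [hsplit, ← Metric.cobounded_eq_cocompact]
  refine Tendsto.cobounded_add ?_ (hregular.tendsto.mono_left nhdsWithin_le_nhds)
  refine (tendsto_mul_left_cobounded (by exact_mod_cast neg_ne_zero.2 hj)).comp ?_
  rw [Metric.cobounded_eq_cocompact, cocompact_eq_atBot_atTop]
  exact (tendsto_log_norm_sub_nhdsNE (α i₀)).mono_right le_sup_left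

theorem tendsto_logCurve_cobounded {δ₀ : Fin n → ℤ} (hΔ : δ₀ + ∑ i, δ i = 0) (hδ₀ : δ₀ ≠ 0) :
    Tendsto (logCurve δ α κ) (cobounded ℂ) (cocompact (Fin n → ℝ)) := by
  obtain ⟨j, hj⟩ := Function.ne_iff.1 hδ₀
  refine tendsto_cocompact_pi_of_apply j ?_
  have hδ₀j : (δ₀ j : ℝ) = -∑ i, (δ i j : ℝ) := by
    have := congr_fun hΔ j
    simp only [Pi.add_apply, Finset.sum_apply, Pi.zero_apply] at this
    exact_mod_cast eq_neg_of_add_eq_zero_left this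
  have hsplit : (fun z => logCurve δ α κ z j) = fun z => (δ₀ j : ℝ) * Real.log ‖z‖ +
      (Real.log ‖κ j‖ - ∑ i, (δ i j : ℝ) * (Real.log ‖z - α i‖ - Real.log ‖z‖)) := by
    funext z
    simp only [logCurve, mul_sub, Finset.sum_sub_distrib, ← Finset.sum_mul, hδ₀j]
    ring
  have hregular : Tendsto (fun z => Real.log ‖κ j‖ -
      ∑ i, (δ i j : ℝ) * (Real.log ‖z - α i‖ - Real.log ‖z‖)) (cobounded ℂ)
      (𝓝 (Real.log ‖κ j‖ - ∑ i, (δ i j : ℝ) * 0)) :=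
    tendsto_const_nhds.sub <| tendsto_finsetSum _ fun i _ =>
      (tendsto_log_norm_sub_sub_log_norm_cobounded (α i)).const_mul _
  rw [hsplit, ← Metric.cobounded_eq_cocompact]
  refine Tendsto.cobounded_add ?_ hregular
  refine (tendsto_mul_left_cobounded (by exact_mod_cast hj)).comp ?_
  rw [Metric.cobounded_eq_cocompact (α := ℝ), cocompact_eq_atBot_atTop]
  exact (Real.tendsto_log_atTop.comp tendsto_norm_cobounded_atTop).mono_right le_sup_right

theorem isProperMap_logCurve_restrict (hα : Function.Injective α) {δ₀ : Fin n → ℤ}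
    (hΔ : δ₀ + ∑ i, δ i = 0) (hδ₀ : δ₀ ≠ 0) (hδ : ∀ i, δ i ≠ 0) :
    IsProperMap (fun z : {z : ℂ // ∀ i, z ≠ α i} => logCurve δ α κ z) := by
  refine isProperMap_iff_tendsto_cocompact.2 ⟨continuousOn_logCurve.domRestrict, ?_⟩
  refine (Tendsto.comp (g := logCurve δ α κ) ?_ tendsto_comap).mono_left
    (cocompact_subtype_le_comap_cocompact_sup_nhdsNE {z : ℂ | ∀ i, z ≠ α i})
  rw [← Metric.cobounded_eq_cocompact (α := ℂ)]
  refine (tendsto_logCurve_cobounded hΔ hδ₀).sup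
    (tendsto_iSup.2 fun a => tendsto_iSup.2 fun ha => ?_)
  obtain ⟨i, rfl⟩ : ∃ i, a = α i := by simpa using ha
  exact tendsto_logCurve_nhdsNE hα (hδ i)

end LogCurve

theorem stmt_12_general (n k : ℕ)
    (δ₀ : Fin n → ℤ) (δ : Fin k → Fin n → ℤ)
    (hΔ : δ₀ + ∑ i : Fin k, δ i = 0)
    (hδ₀ : δ₀ ≠ 0) (hδ : ∀ i, δ i ≠ 0)
    (α : Fin k → ℂ) (hα : Function.Injective α)
    (κ : Fin n → ℂ) (hκ : ∀ j, κ j ≠ 0) :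
    (∀ K : Set (Fin n → ℝ), IsCompact K →
      IsCompact ((fun z : {z : ℂ // ∀ i, z ≠ α i} =>
        LogMap (fun j : Fin n => κ j * ∏ i : Fin k, ((z : ℂ) - α i) ^ (-(δ i j))))
          ⁻¹' K)) ∧
    IsClosed (Set.range (fun z : {z : ℂ // ∀ i, z ≠ α i} =>
      LogMap (fun j : Fin n => κ j * ∏ i : Fin k, ((z : ℂ) - α i) ^ (-(δ i j))))) := by
  have hf : (fun z : {z : ℂ // ∀ i, z ≠ α i} =>
      LogMap (fun j : Fin n => κ j * ∏ i : Fin k, ((z : ℂ) - α i) ^ (-(δ i j)))) =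
      fun z : {z : ℂ // ∀ i, z ≠ α i} => logCurve δ α κ z :=
    funext fun z => LogMap_eq_logCurve hκ z.2
  have hproper := isProperMap_logCurve_restrict (κ := κ) hα hΔ hδ₀ hδ
  rw [hf]
  exact ⟨fun K hK => hproper.isCompact_preimage hK, hproper.isClosedMap.isClosed_range⟩

/-- Let `δ₀, δ₁, …, δ_k ∈ ℤⁿ` with `δ₀ + ∑ᵢ δᵢ = 0` and all `δᵢ ≠ 0`.
For pairwise distinct punctures `α₁, …, α_k` and `κ_j ∈ ℂ∖{0}`, the map
`Log ∘ f : S → ℝⁿ`, where `S = ℂ∖{α₁,…,α_k}` and `f(z)_j = κ_j ∏ᵢ (z-αᵢ)^{-δᵢʲ}`,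
is proper (preimages of compact sets are compact); in particular the amoeba
`Log(f(S))` is closed in `ℝⁿ`. -/
theorem stmt_12 (n k : ℕ) (hn : 1 ≤ n) (hk : 1 ≤ k)
    (δ₀ : Fin n → ℤ) (δ : Fin k → Fin n → ℤ)
    (hΔ : δ₀ + ∑ i : Fin k, δ i = 0)
    (hδ₀ : δ₀ ≠ 0) (hδ : ∀ i, δ i ≠ 0)
    (α : Fin k → ℂ) (hα : Function.Injective α)
    (κ : Fin n → ℂ) (hκ : ∀ j, κ j ≠ 0) :
    (∀ K : Set (Fin n → ℝ), IsCompact K →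
      IsCompact ((fun z : {z : ℂ // ∀ i, z ≠ α i} =>
        LogMap (fun j : Fin n => κ j * ∏ i : Fin k, ((z : ℂ) - α i) ^ (-(δ i j))))
          ⁻¹' K)) ∧
    IsClosed (Set.range (fun z : {z : ℂ // ∀ i, z ≠ α i} =>
      LogMap (fun j : Fin n => κ j * ∏ i : Fin k, ((z : ℂ) - α i) ^ (-(δ i j))))) :=
  stmt_12_general n k δ₀ δ hΔ hδ₀ hδ α hα κ hκ
end

section
/- Fix n ≥ 1, vectors δ₁, δ₂, δ₃, δ₄ ∈ ℤⁿ with δ₁+δ₂+δ₃+δ₄ = 0, and a partition {1,2,3,4} = {a,b} ⊔ {c,d} into two pairs. For v ∈ ℝⁿ and l ≥ 0 define Γ(v,l) = {v + t·δ_a : t ≥ 0} ∪ {v + t·δ_b : t ≥ 0} ∪ {v + t·(δ_c+δ_d) : t ∈ [0,l]} ∪ {w + t·δ_c : t ≥ 0} ∪ {w + t·δ_d : t ≥ 0}, where w = v + l·(δ_c+δ_d). If (v_m, l_m) → (v, l) in ℝⁿ × [0,∞), then the sets Γ(v_m, l_m) converge locally in the Hausdorff sense to Γ(v, l). -/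
/-- Local Hausdorff convergence of a sequence of subsets of `ℝⁿ` to a closed set `A`:
for every compact `K` and every `ε > 0`, eventually `A_m ∩ K ⊆ U_ε(A)` and
`A ∩ K ⊆ U_ε(A_m)`. -/
def LocHausConv {n : ℕ} (A : ℕ → Set (Fin n → ℝ)) (B : Set (Fin n → ℝ)) : Prop :=
  ∀ K : Set (Fin n → ℝ), IsCompact K → ∀ ε : ℝ, 0 < ε →
    ∃ M : ℕ, ∀ m ≥ M, A m ∩ K ⊆ nbhd ε B ∧ B ∩ K ⊆ nbhd ε (A m)

/-- Segment from `v` in direction `d` of parameter length `l`. -/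
def seg {n : ℕ} (v d : Fin n → ℝ) (l : ℝ) : Set (Fin n → ℝ) :=
  {x | ∃ t : ℝ, 0 ≤ t ∧ t ≤ l ∧ x = v + t • d}

/-- Image of a tropical rational curve with four ends of directions `δ a, δ b, δ c, δ d`:
two vertices `v` and `w = v + l • (δ c + δ d)` joined by a bounded edge, with the rays
`δ a, δ b` at `v` and the rays `δ c, δ d` at `w`. -/
noncomputable def fourEndCurve {n : ℕ} (δ : Fin 4 → Fin n → ℤ) (a b c d : Fin 4)
    (v : Fin n → ℝ) (l : ℝ) : Set (Fin n → ℝ) :=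
  ray v (intCast (δ a)) ∪ ray v (intCast (δ b)) ∪
    seg v (intCast (δ c + δ d)) l ∪
    ray (v + l • intCast (δ c + δ d)) (intCast (δ c)) ∪
    ray (v + l • intCast (δ c + δ d)) (intCast (δ d))

lemma curve_subset_nbhd {n : ℕ} (δ : Fin 4 → Fin n → ℤ) (a b c d : Fin 4)
    (v v' : Fin n → ℝ) (l l' : ℝ) (hl : 0 ≤ l) (hl' : 0 ≤ l') (ε : ℝ)
    (h : ‖v' - v‖ + |l' - l| * ‖intCast (δ c + δ d)‖ < ε) :
    fourEndCurve δ a b c d v' l' ⊆ nbhd ε (fourEndCurve δ a b c d v l) := by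
  set D := intCast (δ c + δ d) with hD
  have habs : (0:ℝ) ≤ |l' - l| * ‖D‖ := mul_nonneg (abs_nonneg _) (norm_nonneg _)
  rintro x ((((⟨t, ht, rfl⟩ | ⟨t, ht, rfl⟩) | ⟨t, ht0, htl, rfl⟩) | ⟨t, ht, rfl⟩) | ⟨t, ht, rfl⟩)
  · refine ⟨v + t • intCast (δ a), Or.inl (Or.inl (Or.inl (Or.inl ⟨t, ht, rfl⟩))), ?_⟩
    have : (v' + t • intCast (δ a)) - (v + t • intCast (δ a)) = v' - v := by module
    rw [this]; linarith
  · refine ⟨v + t • intCast (δ b), Or.inl (Or.inl (Or.inl (Or.inr ⟨t, ht, rfl⟩))), ?_⟩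
    have : (v' + t • intCast (δ b)) - (v + t • intCast (δ b)) = v' - v := by module
    rw [this]; linarith
  · refine ⟨v + (min t l) • D,
      Or.inl (Or.inl (Or.inr ⟨min t l, le_min ht0 hl, min_le_right _ _, rfl⟩)), ?_⟩
    have heq : (v' + t • D) - (v + (min t l) • D) = (v' - v) + (t - min t l) • D := by
      rw [sub_smul]; module
    have hmin : |t - min t l| ≤ |l' - l| := by
      rcases le_total t l with h1 | h1
      · rw [min_eq_left h1]; simp [abs_nonneg]
      · rw [min_eq_right h1, abs_of_nonneg (by linarith)]
        have : t - l ≤ l' - l := by linarith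
        exact this.trans (le_abs_self _)
    calc ‖(v' + t • D) - (v + (min t l) • D)‖
        ≤ ‖v' - v‖ + ‖(t - min t l) • D‖ := by rw [heq]; exact norm_add_le _ _
      _ = ‖v' - v‖ + |t - min t l| * ‖D‖ := by rw [norm_smul, Real.norm_eq_abs]
      _ ≤ ‖v' - v‖ + |l' - l| * ‖D‖ := by
          have := mul_le_mul_of_nonneg_right hmin (norm_nonneg D); linarith
      _ < ε := h
  · refine ⟨(v + l • D) + t • intCast (δ c),
      Or.inl (Or.inr ⟨t, ht, rfl⟩), ?_⟩
    have heq : ((v' + l' • D) + t • intCast (δ c)) - ((v + l • D) + t • intCast (δ c))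
        = (v' - v) + (l' - l) • D := by rw [sub_smul]; module
    calc ‖((v' + l' • D) + t • intCast (δ c)) - ((v + l • D) + t • intCast (δ c))‖
        ≤ ‖v' - v‖ + ‖(l' - l) • D‖ := by rw [heq]; exact norm_add_le _ _
      _ = ‖v' - v‖ + |l' - l| * ‖D‖ := by rw [norm_smul, Real.norm_eq_abs]
      _ < ε := h
  · refine ⟨(v + l • D) + t • intCast (δ d),
      Or.inr ⟨t, ht, rfl⟩, ?_⟩
    have heq : ((v' + l' • D) + t • intCast (δ d)) - ((v + l • D) + t • intCast (δ d))
        = (v' - v) + (l' - l) • D := by rw [sub_smul]; module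
    calc ‖((v' + l' • D) + t • intCast (δ d)) - ((v + l • D) + t • intCast (δ d))‖
        ≤ ‖v' - v‖ + ‖(l' - l) • D‖ := by rw [heq]; exact norm_add_le _ _
      _ = ‖v' - v‖ + |l' - l| * ‖D‖ := by rw [norm_smul, Real.norm_eq_abs]
      _ < ε := h

/-- For a fixed combinatorial type of four-ended tropical rational
curves, convergence of the parameters `(v_m, l_m) → (v, l)` implies local Hausdorff
convergence of the images `Γ(v_m, l_m) → Γ(v, l)`. -/
theorem stmt_17 (n : ℕ) (hn : 1 ≤ n) (δ : Fin 4 → Fin n → ℤ)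
    (hΔ : δ 0 + δ 1 + δ 2 + δ 3 = 0)
    (a b c d : Fin 4)
    (hab : a ≠ b) (hac : a ≠ c) (had : a ≠ d) (hbc : b ≠ c) (hbd : b ≠ d) (hcd : c ≠ d)
    (vm : ℕ → Fin n → ℝ) (lm : ℕ → ℝ) (hlm : ∀ m, 0 ≤ lm m)
    (v : Fin n → ℝ) (l : ℝ) (hl : 0 ≤ l)
    (hv : Filter.Tendsto vm Filter.atTop (nhds v))
    (hlconv : Filter.Tendsto lm Filter.atTop (nhds l)) :
    LocHausConv (fun m => fourEndCurve δ a b c d (vm m) (lm m))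
      (fourEndCurve δ a b c d v l) := by
  intro K _ ε hε
  set C := ‖intCast (δ c + δ d)‖ with hC
  have hA : Filter.Tendsto (fun m => ‖vm m - v‖) Filter.atTop (nhds 0) :=
    tendsto_iff_norm_sub_tendsto_zero.mp hv
  have hB : Filter.Tendsto (fun m => |lm m - l|) Filter.atTop (nhds 0) := by
    have := tendsto_iff_norm_sub_tendsto_zero.mp hlconv
    simpa [Real.norm_eq_abs] using this
  have hsum : Filter.Tendsto (fun m => ‖vm m - v‖ + |lm m - l| * C)
      Filter.atTop (nhds 0) := by
    have := hA.add (hB.mul_const C)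
    simpa using this
  have hev : ∀ᶠ m in Filter.atTop, ‖vm m - v‖ + |lm m - l| * C < ε :=
    hsum.eventually_lt_const hε
  rw [Filter.eventually_atTop] at hev
  obtain ⟨M, hM⟩ := hev
  refine ⟨M, fun m hm => ⟨?_, ?_⟩⟩
  · intro x hx
    exact curve_subset_nbhd δ a b c d v (vm m) l (lm m) hl (hlm m) ε (hM m hm) hx.1
  · intro x hx
    refine curve_subset_nbhd δ a b c d (vm m) v (lm m) l (hlm m) hl ε ?_ hx.1
    rw [norm_sub_rev, abs_sub_comm]
    exact hM m hm
end
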